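/- arXiv:2410.10194 — 2 statements merged into one kernel-verified Lean document; each statement's English description precedes it below -/
import Mathlib

section
/- There exists a universal constant c > 0 such that the following holds. Let G = (V,E) be a finite simple graph on n ≥ 2 vertices, let α > 0, and let m ≥ 1 be such that there is no subset U ⊆ V with |U| ≥ m for which the induced subgraph G[U] is an α-expander. Then V can be partitioned into sets {A_i}_i such that |A_i| < 3m for every i, and the number of edges of G whose two endpoints lie in different parts A_i, A_j (i ≠ j) is at most c·log(n)·α·n. -/
open scoped Classical

/-- A Pauli operator on `n` qubits, modulo phase, in symplectic representation. -/
abbrev PauliVec (n : ℕ) : Type := (Fin n → ZMod 2) × (Fin n → ZMod 2)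

/-- The support of a Pauli operator: qubits where it acts nontrivially. -/
def PauliSupport {n : ℕ} (v : PauliVec n) : Finset (Fin n) :=
  Finset.univ.filter fun i => v.1 i ≠ 0 ∨ v.2 i ≠ 0

/-- The weight of a Pauli operator. -/
def PauliWeight {n : ℕ} (v : PauliVec n) : ℕ := (PauliSupport v).card

/-- The symplectic form; it vanishes iff the corresponding Paulis commute. -/
def sympForm {n : ℕ} (v w : PauliVec n) : ZMod 2 :=
  ∑ i, (v.1 i * w.2 i + v.2 i * w.1 i)

lemma sympForm_add_left {n : ℕ} (a b w : PauliVec n) :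
    sympForm (a + b) w = sympForm a w + sympForm b w := by
  simp only [sympForm, Prod.fst_add, Prod.snd_add, Pi.add_apply]
  rw [← Finset.sum_add_distrib]
  exact Finset.sum_congr rfl fun i _ => by ring

lemma sympForm_smul_left {n : ℕ} (c : ZMod 2) (a w : PauliVec n) :
    sympForm (c • a) w = c * sympForm a w := by
  simp only [sympForm, Prod.smul_fst, Prod.smul_snd, Pi.smul_apply, smul_eq_mul,
    Finset.mul_sum]
  exact Finset.sum_congr rfl fun i _ => by ring

/-- The symplectic orthogonal complement of a subspace of Pauli operators. -/
def sympCompl {n : ℕ} (W : Submodule (ZMod 2) (PauliVec n)) :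
    Submodule (ZMod 2) (PauliVec n) where
  carrier := {v | ∀ w ∈ W, sympForm v w = 0}
  zero_mem' := by
    intro w _
    simp [sympForm]
  add_mem' := by
    intro a b ha hb w hw
    rw [sympForm_add_left, ha w hw, hb w hw, add_zero]
  smul_mem' := by
    intro c v hv w hw
    rw [sympForm_smul_left, hv w hw, mul_zero]

/-- The gauge group (as an `F₂`-subspace) spanned by a family of gauge checks. -/
def gaugeGroup {N r : ℕ} (g : Fin r → PauliVec N) : Submodule (ZMod 2) (PauliVec N) :=
  Submodule.span (ZMod 2) (Set.range g)

/-- The number of logical qubits of the subsystem code with gauge checks `g`: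
`k = (dim G^⊥ − dim (G ∩ G^⊥))/2`. -/
noncomputable def subsysLogicalQubits {N r : ℕ} (g : Fin r → PauliVec N) : ℕ :=
  (Module.finrank (ZMod 2) ↥(sympCompl (gaugeGroup g)) -
    Module.finrank (ZMod 2) ↥(gaugeGroup g ⊓ sympCompl (gaugeGroup g))) / 2

/-- The dressed distance of the subsystem code with gauge checks `g`:
`d = min {|v| : v ∈ (G + G^⊥) ∖ G}`. -/
noncomputable def dressedDistance {N r : ℕ} (g : Fin r → PauliVec N) : ℕ :=
  sInf {w : ℕ | ∃ v : PauliVec N,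
    v ∈ (gaugeGroup g ⊔ sympCompl (gaugeGroup g) : Submodule (ZMod 2) (PauliVec N)) ∧
    v ∉ gaugeGroup g ∧ PauliWeight v = w}

/-- The stabilizer group (as an `F₂`-subspace) spanned by a family of checks. -/
def stabGroup {n m : ℕ} (s : Fin m → PauliVec n) : Submodule (ZMod 2) (PauliVec n) :=
  Submodule.span (ZMod 2) (Set.range s)

/-- The number of logical qubits of a stabilizer code: `k = n − dim S`. -/
noncomputable def stabLogicalQubits {n m : ℕ} (s : Fin m → PauliVec n) : ℕ :=
  n - Module.finrank (ZMod 2) ↥(stabGroup s)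

/-- The distance of a stabilizer code: `d = min {|v| : v ∈ S^⊥ ∖ S}`. -/
noncomputable def stabDistance {n m : ℕ} (s : Fin m → PauliVec n) : ℕ :=
  sInf {w : ℕ | ∃ v : PauliVec n,
    v ∈ sympCompl (stabGroup s) ∧ v ∉ stabGroup s ∧ PauliWeight v = w}

/-- The degree of a qubit: the number of checks whose support contains it. -/
noncomputable def checkDegree {n m : ℕ} (s : Fin m → PauliVec n) (q : Fin n) : ℕ :=
  (Finset.univ.filter fun i => q ∈ PauliSupport (s i)).card

/-- The degree of a qubit in a subsystem code, not counting single-qubit gauge checks: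
the number of gauge checks of weight at least `2` whose support contains it. -/
noncomputable def gaugeDegree {N r : ℕ} (g : Fin r → PauliVec N) (q : Fin N) : ℕ :=
  (Finset.univ.filter fun i => q ∈ PauliSupport (g i) ∧ 2 ≤ PauliWeight (g i)).card

/-- The code with gauge checks `g` is local in `D` dimensions with constant `C`:
there is a layout map `π` to `ℤ^D` with at most `C` qubits per lattice point such
that the support of every gauge check has `ℓ∞`-diameter at most `C`. -/
def LocalInDim {N r : ℕ} (g : Fin r → PauliVec N) (D : ℕ) (C : ℕ) : Prop :=
  ∃ π : Fin N → (Fin D → ℤ),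
    (∀ p : Fin D → ℤ, (Finset.univ.filter fun q => π q = p).card ≤ C) ∧
    (∀ i : Fin r, ∀ q ∈ PauliSupport (g i), ∀ q' ∈ PauliSupport (g i), ∀ j : Fin D,
      |π q j - π q' j| ≤ (C : ℤ))

/-- The number of edges of `G` with one endpoint in `S` and the other outside `S`. -/
noncomputable def cutEdges {V : Type} [Fintype V] (G : SimpleGraph V) (S : Finset V) : ℕ :=
  (Finset.univ.filter fun p : V × V => p.1 ∈ S ∧ p.2 ∉ S ∧ G.Adj p.1 p.2).card

/-- `G` is an `α`-expander: every cut `(S, V∖S)` has at least `α·min(|S|,|V∖S|)` edges. -/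
def IsExpander {V : Type} [Fintype V] (G : SimpleGraph V) (α : ℝ) : Prop :=
  ∀ S : Finset V, S.Nonempty → S ≠ Finset.univ →
    α * min (S.card : ℝ) ((Sᶜ : Finset V).card : ℝ) ≤ (cutEdges G S : ℝ)

/-- The code with gauge checks `g` is local on the graph `G` with constant `C`:
there is a map `ρ` from qubits to vertices with at most `C` qubits per vertex, such
that every gauge check is supported on qubits mapped to a single vertex or to two
adjacent vertices. -/
def LocalOnGraph {V : Type} [Fintype V] (G : SimpleGraph V) {N r : ℕ}
    (g : Fin r → PauliVec N) (C : ℕ) : Prop :=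
  ∃ ρ : Fin N → V,
    (∀ v : V, (Finset.univ.filter fun q => ρ q = v).card ≤ C) ∧
    (∀ i : Fin r, ∃ u v : V, (u = v ∨ G.Adj u v) ∧
      ∀ q ∈ PauliSupport (g i), ρ q = u ∨ ρ q = v)

/-!
Split recursively along sparse cuts: while a vertex set `U` has at least `m` elements, `G[U]` is
not an `α`-expander, so some `S ⊂ U` sends fewer than `α · min(|S|, |U \ S|)` edges to `U \ S`;
recurse on `S` and `U \ S` and stop at sets of fewer than `m` vertices. Charging each cut to its
smaller side, the potential `φ(n) = n log₂ n` satisfies `φ(s) + φ(t) + min(s, t) ≤ φ(s + t)`,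
so at most `2α · n log₂ n` ordered pairs of adjacent vertices end up in different parts.
-/

open Finset Real

lemma min_add_mul_logb_add_mul_logb_le {s t : ℝ} (hs : 0 < s) (ht : 0 < t) :
    min s t + s * logb 2 s + t * logb 2 t ≤ (s + t) * logb 2 (s + t) := by
  wlog hst : s ≤ t generalizing s t
  · rw [min_comm, add_comm s t]
    linarith [this ht hs (le_of_not_ge hst)]
  have hs' : logb 2 (2 * s) ≤ logb 2 (s + t) :=
    logb_le_logb_of_le one_lt_two (by positivity) (by linarith)
  have ht' : logb 2 t ≤ logb 2 (s + t) := logb_le_logb_of_le one_lt_two ht (by linarith)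
  rw [logb_mul two_ne_zero hs.ne', logb_self_eq_one one_lt_two] at hs'
  rw [min_eq_left hst]
  nlinarith [mul_le_mul_of_nonneg_left hs' hs.le, mul_le_mul_of_nonneg_left ht' ht.le]

variable {V : Type} {G : SimpleGraph V}

lemma exists_sparse_cut_of_not_isExpander {α : ℝ} {U : Finset V}
    (h : ¬ IsExpander (G.induce (U : Set V)) α) :
    ∃ S ⊂ U, S.Nonempty ∧ (#(G.interedges S (U \ S)) : ℝ) < α * min (#S : ℝ) #(U \ S) := by
  simp only [IsExpander, not_forall, not_le, card_compl, coe_sort_coe, Fintype.card_coe] at h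
  obtain ⟨S, hS, hSU, hcut⟩ := h
  let ι : (U : Set V) ↪ V := Function.Embedding.subtype _
  have hSU' : S.map ι ⊂ U := by
    obtain ⟨x, -, hx⟩ := exists_of_ssubset (Finset.ssubset_univ_iff.mpr hSU)
    refine (ssubset_iff_of_subset fun v hv => ?_).mpr ⟨x, x.2, by simpa [ι] using hx⟩
    obtain ⟨y, -, rfl⟩ := mem_map.mp hv
    exact y.2
  have hcutEdges :
      cutEdges (G.induce (U : Set V)) S = #(G.interedges (S.map ι) (U \ S.map ι)) := by
    rw [cutEdges, ← card_map (ι.prodMap ι)]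
    congr 1
    ext ⟨a, b⟩
    simp only [mem_map, mem_filter, mem_univ, true_and, SimpleGraph.mem_interedges_iff, mem_sdiff]
    aesop
  refine ⟨S.map ι, hSU', hS.map, ?_⟩
  rwa [← hcutEdges, card_sdiff_of_subset hSU'.subset, card_map]

noncomputable def crossingPairs (G : SimpleGraph V) {ι : Type*} (f : V → ι) (U : Finset V) :
    Finset (V × V) :=
  {p ∈ G.interedges U U | f p.1 ≠ f p.2}

lemma card_crossingPairs_piecewise_le {S T : Finset V} (f₁ f₂ : V → ℕ) :
    #(crossingPairs G (S.piecewise (2 * f₁ ·) (2 * f₂ · + 1)) (S ∪ T)) ≤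
      #(crossingPairs G f₁ S) + #(crossingPairs G f₂ T) + 2 * #(G.interedges S T) := by
  have hsub : crossingPairs G (S.piecewise (2 * f₁ ·) (2 * f₂ · + 1)) (S ∪ T) ⊆
      crossingPairs G f₁ S ∪ crossingPairs G f₂ T ∪ (G.interedges S T ∪ G.interedges T S) := by
    rintro ⟨a, b⟩ hab
    simp only [crossingPairs, mem_filter, SimpleGraph.mk_mem_interedges_iff, mem_union] at hab ⊢
    by_cases ha : a ∈ S <;> by_cases hb : b ∈ S <;>
      simp only [piecewise_eq_of_mem, piecewise_eq_of_notMem, ha, hb, not_false_eq_true]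
        at hab ⊢ <;>
      grind
  have hsymm : #(G.interedges T S) = #(G.interedges S T) :=
    have := G.symm
    Rel.card_interedges_comm _ _
  calc _ ≤ _ := card_le_card hsub
    _ ≤ #(crossingPairs G f₁ S) + #(crossingPairs G f₂ T) +
          (#(G.interedges S T) + #(G.interedges T S)) :=
        (card_union_le _ _).trans (add_le_add (card_union_le _ _) (card_union_le _ _))
    _ = _ := by omega

theorem exists_labeling_of_forall_not_isExpander {α : ℝ} {m : ℕ} (hα : 0 ≤ α)
    (hG : ∀ U : Finset V, m ≤ #U → ¬ IsExpander (G.induce (U : Set V)) α) (U : Finset V) :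
    ∃ f : V → ℕ, (∀ k, #{v ∈ U | f v = k} < m) ∧
      (#(crossingPairs G f U) : ℝ) ≤ 2 * α * #U * logb 2 #U := by
  induction U using Finset.strongInduction with | _ U ih => ?_
  by_cases hU : #U < m
  · refine ⟨fun _ => 0, fun k => (card_filter_le _ _).trans_lt hU, ?_⟩
    have hempty : crossingPairs G (fun _ => 0) U = ∅ := by simp [crossingPairs]
    have hlog : 0 ≤ logb 2 #U := div_nonneg (log_natCast_nonneg _) (log_nonneg one_le_two)
    rw [hempty, card_empty, Nat.cast_zero]
    positivity
  obtain ⟨S, hSU, hS, hcut⟩ := exists_sparse_cut_of_not_isExpander (hG U (not_lt.mp hU))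
  have hT : (U \ S).Nonempty := sdiff_nonempty.mpr (not_subset_of_ssubset hSU)
  obtain ⟨f₁, hf₁, hS'⟩ := ih S hSU
  obtain ⟨f₂, hf₂, hT'⟩ := ih (U \ S) (sdiff_ssubset hSU.subset hS)
  refine ⟨S.piecewise (2 * f₁ ·) (2 * f₂ · + 1), fun k => ?_, ?_⟩
  · obtain ⟨j, rfl | rfl⟩ := Nat.even_or_odd' k
    · refine (card_le_card fun v hv => ?_).trans_lt (hf₁ j)
      by_cases hvS : v ∈ S <;> simp [hvS] at hv ⊢ <;> omega
    · refine (card_le_card fun v hv => ?_).trans_lt (hf₂ j)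
      by_cases hvS : v ∈ S <;> simp [hvS] at hv ⊢ <;> omega
  · have hcross := card_crossingPairs_piecewise_le (G := G) (S := S) (T := U \ S) f₁ f₂
    rw [union_sdiff_of_subset hSU.subset] at hcross
    have hcard : (#U : ℝ) = #S + #(U \ S) := by
      rw [← Nat.cast_add, add_comm, card_sdiff_add_card_eq_card hSU.subset]
    have hlog := min_add_mul_logb_add_mul_logb_le (s := #S) (t := #(U \ S))
      (by positivity) (by positivity)
    rw [hcard]
    calc (#(crossingPairs G _ U) : ℝ)
        ≤ #(crossingPairs G f₁ S) + #(crossingPairs G f₂ (U \ S)) +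
            2 * #(G.interedges S (U \ S)) := by exact_mod_cast hcross
      _ ≤ 2 * α * #S * logb 2 #S + 2 * α * #(U \ S) * logb 2 #(U \ S) +
            2 * (α * min (#S : ℝ) #(U \ S)) := by gcongr
      _ ≤ _ := by nlinarith [mul_le_mul_of_nonneg_left hlog hα]

lemma card_filter_edgeFinset_le_card_crossingPairs [Fintype V] {t : ℕ} {ι : Type*}
    (A : Fin t → Finset V) (f : V → ι) (hf : ∀ u v, f u = f v → ∃ i, u ∈ A i ∧ v ∈ A i) :
    #(G.edgeFinset.filter fun e => ¬ ∃ i, ∀ v ∈ e, v ∈ A i) ≤ #(crossingPairs G f univ) := by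
  refine card_le_card_of_surjOn (fun p => s(p.1, p.2)) fun e he => ?_
  induction e using Sym2.ind with | _ u v => ?_
  simp only [coe_filter, Set.mem_ofPred_eq, SimpleGraph.mem_edgeFinset,
    SimpleGraph.mem_edgeSet] at he
  refine ⟨(u, v), ?_, rfl⟩
  simp only [crossingPairs, coe_filter, Set.mem_ofPred_eq, SimpleGraph.mk_mem_interedges_iff,
    mem_univ, true_and]
  refine ⟨he.1, fun huv => he.2 ?_⟩
  obtain ⟨i, hu, hv⟩ := hf u v huv
  exact ⟨i, fun w hw => by rcases Sym2.mem_iff.mp hw with rfl | rfl <;> assumption⟩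

/-- **Partitioning graphs with no large expanding subgraph** (Theorem 13 of Baspin).
There is a universal constant `c > 0` such that: if `G` is a graph on `n ≥ 2`
vertices, `α > 0`, `m ≥ 1`, and no vertex subset `U` with `|U| ≥ m` induces an
`α`-expander, then `V` can be partitioned into parts of size `< 3m` with at most
`c·log(n)·α·n` edges between different parts. -/
theorem graph_partitioning : ∃ c : ℝ, 0 < c ∧
    ∀ (V : Type) [Fintype V], ∀ (G : SimpleGraph V) (α : ℝ) (m : ℕ),
      2 ≤ Fintype.card V → 0 < α → 1 ≤ m →
      (∀ U : Finset V, m ≤ U.card → ¬ IsExpander (G.induce (↑U : Set V)) α) →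
      ∃ (t : ℕ) (A : Fin t → Finset V),
        (∀ v : V, ∃! i, v ∈ A i) ∧
        (∀ i, (A i).card < 3 * m) ∧
        (((G.edgeFinset.filter fun e => ¬ ∃ i, ∀ v ∈ e, v ∈ A i).card : ℝ) ≤
          c * Real.log (Fintype.card V) * α * (Fintype.card V)) := by
  refine ⟨2 / log 2, by positivity, fun V _ G α m _ hα _ hG => ?_⟩
  obtain ⟨f, hfib, hcross⟩ := exists_labeling_of_forall_not_isExpander hα.le hG univ
  let A : Fin (univ.sup f + 1) → Finset V := fun i => {v | f v = i}
  have hmem : ∀ v, v ∈ A ⟨f v, Nat.lt_succ_of_le (le_sup (mem_univ v))⟩ := by simp [A]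
  have hunique : ∀ v, ∃! i, v ∈ A i := fun v =>
    ⟨_, hmem v, fun _ hi => Fin.ext (mem_filter.mp hi).2.symm⟩
  have hedges := card_filter_edgeFinset_le_card_crossingPairs (G := G) A f
    fun u v h => ⟨_, hmem u, by simp [A, h]⟩
  refine ⟨_, A, hunique, fun i => (hfib i).trans_le (by omega), ?_⟩
  calc _ ≤ (#(crossingPairs G f univ) : ℝ) := Nat.cast_le.mpr hedges
    _ ≤ 2 * α * Fintype.card V * logb 2 (Fintype.card V) := by simpa using hcross
    _ = _ := by rw [logb]; ring
end

section
/- There exists a universal constant c > 0 such that the following holds. Let G = (V,E) be a finite simple graph on n ≥ 2 vertices, and let a subsystem code on n qubits with k logical qubits and dressed distance d be local on G in the sense that its qubits are in bijection with V and every gauge check of weight at least 2 is supported on a set of pairwise adjacent vertices of G. Then there exist pairwise disjoint subsets H₁,…,H_t ⊆ V such that |H_j| ≥ d/3 for every j, Σ_j |H_j| ≥ k/2, and every induced subgraph G[H_j] is an α-expander with α = k/(4c·log(n)·n). -/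
open scoped Classical

/-!
Cut `G` recursively along sparse cuts. A part that is an `α`-expander with at least `d`
vertices becomes one of the `H_j`; a part with fewer than `d` vertices is set aside; any other
part has a cut with fewer than `α·min(|S|, |S̄|)` edges, and deleting the vertices of `S` on cut
edges leaves two non-adjacent pieces to recurse on. The set-aside parts are pairwise disjoint
and non-adjacent, so by locality they are jointly correctable and cover at most `n - k`
vertices. The deleted vertices are paid for by the potential `α·m log₂ m`, which amounts to at
most `α n log₂ n = k / (4 ln 2) ≤ k/2` (with `c = 1`), so the `H_j` cover at least `k/2` vertices.
-/

lemma List.Pairwise.rel_get_of_ne {α : Type*} {R : α → α → Prop} (hR : ∀ a b, R a b → R b a)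
    {l : List α} (h : l.Pairwise R) {i j : Fin l.length} (hij : i ≠ j) : R (l.get i) (l.get j) :=
  hij.lt_or_gt.elim h.rel_get_of_lt fun hji => hR _ _ (h.rel_get_of_lt hji)

section PauliOperators

variable {n : ℕ}

lemma mem_pauliSupport {v : PauliVec n} {i : Fin n} :
    i ∈ PauliSupport v ↔ v.1 i ≠ 0 ∨ v.2 i ≠ 0 := by
  simp [PauliSupport]

lemma notMem_pauliSupport {v : PauliVec n} {i : Fin n} :
    i ∉ PauliSupport v ↔ v.1 i = 0 ∧ v.2 i = 0 := by
  simp [PauliSupport]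

lemma sympForm_add_right (v a b : PauliVec n) :
    sympForm v (a + b) = sympForm v a + sympForm v b := by
  simp only [sympForm, Prod.fst_add, Prod.snd_add, Pi.add_apply, ← Finset.sum_add_distrib]
  exact Finset.sum_congr rfl fun i _ => by ring

lemma sympForm_smul_right (c : ZMod 2) (v a : PauliVec n) :
    sympForm v (c • a) = c * sympForm v a := by
  simp only [sympForm, Prod.smul_fst, Prod.smul_snd, Pi.smul_apply, smul_eq_mul, Finset.mul_sum]
  exact Finset.sum_congr rfl fun i _ => by ring

lemma mem_sympCompl_gaugeGroup {r : ℕ} {g : Fin r → PauliVec n} {v : PauliVec n} :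
    v ∈ sympCompl (gaugeGroup g) ↔ ∀ i, sympForm v (g i) = 0 := by
  refine ⟨fun h i => h _ (Submodule.subset_span ⟨i, rfl⟩), fun h w hw => ?_⟩
  induction hw using Submodule.span_induction with
  | mem w hw => obtain ⟨i, rfl⟩ := hw; exact h i
  | zero => simp [sympForm]
  | add a b _ _ ha hb => rw [sympForm_add_right, ha, hb, add_zero]
  | smul c a _ ha => rw [sympForm_smul_right, ha, mul_zero]

def PauliVec.restrict (A : Finset (Fin n)) (v : PauliVec n) : PauliVec n :=
  (fun i => if i ∈ A then v.1 i else 0, fun i => if i ∈ A then v.2 i else 0)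

lemma PauliVec.pauliSupport_restrict_subset (A : Finset (Fin n)) (v : PauliVec n) :
    PauliSupport (v.restrict A) ⊆ A := by
  intro i hi
  by_contra hiA
  simp [mem_pauliSupport, PauliVec.restrict, hiA] at hi

lemma PauliVec.restrict_add_restrict {A B : Finset (Fin n)} {v : PauliVec n}
    (hAB : Disjoint A B) (hv : PauliSupport v ⊆ A ∪ B) :
    v.restrict A + v.restrict B = v := by
  refine Prod.ext (funext fun i => ?_) (funext fun i => ?_) <;>
  · by_cases hA : i ∈ A
    · simp [PauliVec.restrict, hA, Finset.disjoint_left.1 hAB hA]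
    by_cases hB : i ∈ B
    · simp [PauliVec.restrict, hA, hB]
    have := notMem_pauliSupport.1 fun hi => (Finset.mem_union.1 (hv hi)).elim hA hB
    simp [PauliVec.restrict, hA, hB, this.1, this.2]

lemma sympForm_restrict (A : Finset (Fin n)) (v w : PauliVec n) :
    sympForm (v.restrict A) w = ∑ i ∈ A, (v.1 i * w.2 i + v.2 i * w.1 i) := by
  rw [sympForm, ← Finset.sum_subset (Finset.subset_univ A) fun i _ hi => by
    simp [PauliVec.restrict, hi]]
  exact Finset.sum_congr rfl fun i hi => by simp [PauliVec.restrict, hi]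

lemma sympForm_restrict_eq_zero {A : Finset (Fin n)} {v w : PauliVec n}
    (h : Disjoint (PauliSupport w) A) : sympForm (v.restrict A) w = 0 := by
  rw [sympForm_restrict]
  refine Finset.sum_eq_zero fun i hi => ?_
  obtain ⟨h1, h2⟩ := notMem_pauliSupport.1 (Finset.disjoint_right.1 h hi)
  simp [h1, h2]

lemma sympForm_restrict_eq_self {A : Finset (Fin n)} {v w : PauliVec n}
    (h : PauliSupport v ∩ PauliSupport w ⊆ A) : sympForm (v.restrict A) w = sympForm v w := by
  rw [sympForm_restrict, sympForm, Finset.sum_subset (Finset.subset_univ A)]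
  intro i _ hiA
  have : i ∉ PauliSupport v ∨ i ∉ PauliSupport w := by
    by_contra! hi
    exact hiA (h (Finset.mem_inter.2 hi))
  rcases this with hi | hi <;> simp [(notMem_pauliSupport.1 hi).1, (notMem_pauliSupport.1 hi).2]

def PauliVec.coordsOn (B : Finset (Fin n)) :
    PauliVec n →ₗ[ZMod 2] (B → ZMod 2) × (B → ZMod 2) :=
  (LinearMap.funLeft (ZMod 2) (ZMod 2) Subtype.val).prodMap
    (LinearMap.funLeft (ZMod 2) (ZMod 2) Subtype.val)

lemma PauliVec.coordsOn_compl_eq_zero_iff {A : Finset (Fin n)} {v : PauliVec n} :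
    PauliVec.coordsOn Aᶜ v = 0 ↔ PauliSupport v ⊆ A := by
  simp only [PauliVec.coordsOn, LinearMap.prodMap_apply, Prod.mk_eq_zero, funext_iff,
    LinearMap.funLeft_apply, Pi.zero_apply, Subtype.forall, Finset.mem_compl, ← forall₂_and,
    Finset.subset_iff, ← notMem_pauliSupport]
  exact forall_congr' fun i => not_imp_not

end PauliOperators

section Correctability

variable {n r : ℕ} {g : Fin r → PauliVec n}

/-- The correctability criterion for subsystem codes: no bare logical operator supported in
`A` is nontrivial. -/
def IsCorrectable (g : Fin r → PauliVec n) (A : Finset (Fin n)) : Prop :=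
  ∀ u ∈ sympCompl (gaugeGroup g), PauliSupport u ⊆ A → u ∈ gaugeGroup g

lemma isCorrectable_empty : IsCorrectable g ∅ := by
  intro u _ hu
  have hzero : ∀ i, u.1 i = 0 ∧ u.2 i = 0 := fun i =>
    notMem_pauliSupport.1 fun hi => Finset.notMem_empty i (hu hi)
  rw [show u = 0 from Prod.ext (funext fun i => (hzero i).1) (funext fun i => (hzero i).2)]
  exact zero_mem _

lemma isCorrectable_of_card_lt_dressedDistance {A : Finset (Fin n)}
    (hA : A.card < dressedDistance g) : IsCorrectable g A := by
  intro u hu huA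
  by_contra huG
  have hd : dressedDistance g ≤ PauliWeight u :=
    Nat.sInf_le ⟨u, Submodule.mem_sup_right hu, huG, rfl⟩
  have : PauliWeight u ≤ A.card := Finset.card_le_card huA
  omega

/-- An operator on `A ∪ B` is the sum of its parts on `A` and on `B`, and each part still
commutes with every check, since a check meets at most one of the two sets. -/
lemma IsCorrectable.union {A B : Finset (Fin n)} (hA : IsCorrectable g A)
    (hB : IsCorrectable g B) (hAB : Disjoint A B)
    (hg : ∀ i, Disjoint (PauliSupport (g i)) A ∨ Disjoint (PauliSupport (g i)) B) :
    IsCorrectable g (A ∪ B) := by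
  intro u hu huAB
  have restrict_mem : ∀ {X Y : Finset (Fin n)}, IsCorrectable g X → PauliSupport u ⊆ X ∪ Y →
      (∀ i, Disjoint (PauliSupport (g i)) X ∨ Disjoint (PauliSupport (g i)) Y) →
      u.restrict X ∈ gaugeGroup g := by
    intro X Y hX huXY hg
    refine hX _ (mem_sympCompl_gaugeGroup.2 fun i => ?_) (u.pauliSupport_restrict_subset X)
    rcases hg i with hgX | hgY
    · exact sympForm_restrict_eq_zero hgX
    · rw [sympForm_restrict_eq_self, mem_sympCompl_gaugeGroup.1 hu i]
      intro j hj
      obtain ⟨hju, hjg⟩ := Finset.mem_inter.1 hj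
      exact (Finset.mem_union.1 (huXY hju)).resolve_right (Finset.disjoint_left.1 hgY hjg)
  rw [← PauliVec.restrict_add_restrict hAB huAB]
  exact add_mem (restrict_mem hA huAB hg)
    (restrict_mem hB (Finset.union_comm A B ▸ huAB) fun i => (hg i).symm)

lemma IsCorrectable.union_of_local {V : Type} {G : SimpleGraph V} {π : Fin n ≃ V}
    (hloc : ∀ i : Fin r, 2 ≤ PauliWeight (g i) →
      ∀ q ∈ PauliSupport (g i), ∀ q' ∈ PauliSupport (g i), q ≠ q' → G.Adj (π q) (π q'))
    {A B : Finset V} (hA : IsCorrectable g (A.map π.symm.toEmbedding))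
    (hB : IsCorrectable g (B.map π.symm.toEmbedding)) (hAB : Disjoint A B)
    (hnadj : ∀ u ∈ A, ∀ v ∈ B, ¬ G.Adj u v) :
    IsCorrectable g ((A ∪ B).map π.symm.toEmbedding) := by
  rw [Finset.map_union]
  refine hA.union hB (Finset.disjoint_map _ |>.2 hAB) fun i => ?_
  by_contra! h
  obtain ⟨q, hq, hqA⟩ := Finset.not_disjoint_iff.1 h.1
  obtain ⟨q', hq', hqB⟩ := Finset.not_disjoint_iff.1 h.2
  simp only [Finset.mem_map_equiv, Equiv.symm_symm] at hqA hqB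
  have hne : q ≠ q' := fun hqq' => Finset.disjoint_left.1 hAB hqA (hqq' ▸ hqB)
  exact hnadj _ hqA _ hqB
    (hloc i (Finset.one_lt_card.2 ⟨q, hq, q', hq', hne⟩) q hq q' hq' hne)

/-- Restricting `G^⊥` to the complement of `A` has kernel inside `G ∩ G^⊥`, so
`dim G^⊥ - dim (G ∩ G^⊥) ≤ 2 (n - |A|)`. -/
lemma IsCorrectable.subsysLogicalQubits_add_card_le {A : Finset (Fin n)}
    (hA : IsCorrectable g A) : subsysLogicalQubits g + A.card ≤ n := by
  unfold subsysLogicalQubits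
  set L := sympCompl (gaugeGroup g)
  set f := (PauliVec.coordsOn Aᶜ).domRestrict L
  have hrange : Module.finrank (ZMod 2) (LinearMap.range f) ≤ 2 * (n - A.card) := by
    refine (Submodule.finrank_le _).trans_eq ?_
    simp [Module.finrank_prod]
    ring
  have hker : Module.finrank (ZMod 2) (LinearMap.ker f) ≤
      Module.finrank (ZMod 2) ↥(gaugeGroup g ⊓ L) := by
    rw [← Submodule.finrank_map_subtype_eq]
    refine Submodule.finrank_mono ?_
    rintro _ ⟨u, hu, rfl⟩
    exact ⟨hA u u.2 (PauliVec.coordsOn_compl_eq_zero_iff.1 hu), u.2⟩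
  have := LinearMap.finrank_range_add_finrank_ker f
  have : A.card ≤ n := by simpa using Finset.card_le_univ A
  omega

end Correctability

section ExpanderDecomposition

noncomputable def mulLog2 (m : ℕ) : ℝ := m * Real.logb 2 m

lemma logb_two_natCast_nonneg (m : ℕ) : 0 ≤ Real.logb 2 m :=
  div_nonneg (Real.log_natCast_nonneg m) (Real.log_nonneg one_le_two)

lemma mulLog2_nonneg (m : ℕ) : 0 ≤ mulLog2 m :=
  mul_nonneg m.cast_nonneg (logb_two_natCast_nonneg m)

lemma mulLog2_mono {a b : ℕ} (h : a ≤ b) : mulLog2 a ≤ mulLog2 b := by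
  rcases Nat.eq_zero_or_pos a with rfl | ha
  · simpa [mulLog2] using mulLog2_nonneg b
  · exact mul_le_mul (by exact_mod_cast h)
      (Real.logb_le_logb_of_le one_lt_two (by exact_mod_cast ha) (by exact_mod_cast h))
      (logb_two_natCast_nonneg a) (Nat.cast_nonneg b)

/-- Joining the smaller part `s ≤ t` at least doubles its size, so each of its vertices gains
at least one in `log₂`. -/
lemma add_mulLog2_add_mulLog2_le {s t : ℕ} (hs : 0 < s) (hst : s ≤ t) :
    (s : ℝ) + mulLog2 s + mulLog2 t ≤ mulLog2 (s + t) := by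
  have hs' : (0 : ℝ) < s := by exact_mod_cast hs
  have hst' : (s : ℝ) ≤ t := by exact_mod_cast hst
  have hlog_s : Real.logb 2 s + 1 ≤ Real.logb 2 ((s : ℝ) + t) := by
    have := Real.logb_le_logb_of_le one_lt_two (by positivity) (by linarith : 2 * (s : ℝ) ≤ s + t)
    rwa [Real.logb_mul two_ne_zero hs'.ne', Real.logb_self_eq_one one_lt_two, add_comm] at this
  have hlog_t : Real.logb 2 t ≤ Real.logb 2 ((s : ℝ) + t) :=
    Real.logb_le_logb_of_le one_lt_two (by linarith) (by linarith)
  unfold mulLog2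
  push_cast
  nlinarith [mul_le_mul_of_nonneg_left hlog_s hs'.le,
    mul_le_mul_of_nonneg_left hlog_t (hs'.le.trans hst')]

lemma min_add_mulLog2_add_mulLog2_le {s t : ℕ} (hs : 0 < s) (ht : 0 < t) :
    min (s : ℝ) t + mulLog2 s + mulLog2 t ≤ mulLog2 (s + t) := by
  rcases le_total s t with h | h
  · rw [min_eq_left (by exact_mod_cast h)]
    exact add_mulLog2_add_mulLog2_le hs h
  · rw [min_eq_right (by exact_mod_cast h), add_assoc, add_comm (mulLog2 s), ← add_assoc,
      add_comm s]
    exact add_mulLog2_add_mulLog2_le ht h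

/-- A sparse cut has sides of sizes `s` and `t`; deleting the `b` vertices of the first side that
lie on cut edges leaves `w₁` of them. -/
lemma card_add_mul_mulLog2_le_of_sparse_cut {α : ℝ} {s t w₁ b : ℕ} (hs : 0 < s) (ht : 0 < t)
    (hw₁ : w₁ ≤ s) (hsb : s ≤ w₁ + b) (hb : (b : ℝ) < α * min (s : ℝ) t) :
    ((s + t : ℕ) : ℝ) + α * mulLog2 w₁ + α * mulLog2 t ≤ w₁ + t + α * mulLog2 (s + t) := by
  have hα : 0 ≤ α := by
    by_contra! hα
    exact (b.cast_nonneg.trans_lt hb).not_ge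
      (mul_nonpos_of_nonpos_of_nonneg hα.le (le_min (Nat.cast_nonneg _) (Nat.cast_nonneg _)))
  have hpot := mul_le_mul_of_nonneg_left (min_add_mulLog2_add_mulLog2_le hs ht) hα
  have hw₁pot := mul_le_mul_of_nonneg_left (mulLog2_mono hw₁) hα
  have : (s : ℝ) ≤ w₁ + b := by exact_mod_cast hsb
  rw [mul_add, mul_add] at hpot
  push_cast
  linarith

variable {V : Type} {G : SimpleGraph V} {α : ℝ}

/-- For a sparse cut `(S, W ∖ S)` of `G[W]`, take `W₁ = S ∖ B` and `W₂ = W ∖ S`, where `B` is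
the set of vertices of `S` on cut edges. -/
lemma exists_split_of_not_isExpander {W : Finset V}
    (hW : ¬ IsExpander (G.induce (W : Set V)) α) :
    ∃ W₁ W₂ : Finset V, W₁ ⊂ W ∧ W₂ ⊂ W ∧ Disjoint W₁ W₂ ∧
      (∀ u ∈ W₁, ∀ v ∈ W₂, ¬ G.Adj u v) ∧
      (W.card : ℝ) + α * mulLog2 W₁.card + α * mulLog2 W₂.card ≤
        W₁.card + W₂.card + α * mulLog2 W.card := by
  simp only [IsExpander, not_forall, not_le] at hW
  obtain ⟨S, hS, hSW, hcut⟩ := hW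
  set S₀ := S.map (Function.Embedding.subtype _)
  set B := (Finset.univ.filter fun p : ↥(W : Set V) × ↥(W : Set V) =>
    p.1 ∈ S ∧ p.2 ∉ S ∧ (G.induce (W : Set V)).Adj p.1 p.2).image fun p => (p.1 : V)
  have hS₀W : S₀ ⊆ W := fun v hv => by
    obtain ⟨x, -, rfl⟩ := Finset.mem_map.1 hv
    exact x.2
  have hcardW : Fintype.card (W : Set V) = W.card := by simp
  have hS₀card : S₀.card = S.card := Finset.card_map _
  have hSlt : S.card < W.card := hcardW ▸ (Finset.card_lt_iff_ne_univ S).2 hSW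
  have hSpos : 0 < S.card := hS.card_pos
  have hTcard : (W \ S₀).card = W.card - S.card := by
    rw [Finset.card_sdiff_of_subset hS₀W, hS₀card]
  simp only [Finset.card_compl] at hcut
  rw [hcardW, ← hTcard, ← hS₀card] at hcut
  have hBcut : B.card ≤ cutEdges (G.induce (W : Set V)) S := by
    unfold cutEdges; convert Finset.card_image_le
  have hB : (B.card : ℝ) < α * min (S₀.card : ℝ) ((W \ S₀).card : ℝ) :=
    (Nat.cast_le.2 hBcut).trans_lt hcut
  refine ⟨S₀ \ B, W \ S₀, ?_, ?_, ?_, ?_, ?_⟩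
  · exact Finset.ssubset_of_subset_of_ssubset Finset.sdiff_subset
      (hS₀W.ssubset_of_ne fun h => by rw [h] at hS₀card; omega)
  · exact Finset.sdiff_ssubset hS₀W ((Finset.map_nonempty).2 hS)
  · exact Finset.disjoint_of_subset_left Finset.sdiff_subset Finset.disjoint_sdiff
  · intro u hu v hv huv
    obtain ⟨huS₀, huB⟩ := Finset.mem_sdiff.1 hu
    obtain ⟨hvW, hvS₀⟩ := Finset.mem_sdiff.1 hv
    obtain ⟨x, hx, rfl⟩ := Finset.mem_map.1 huS₀
    refine huB (Finset.mem_image.2 ⟨(x, ⟨v, hvW⟩), Finset.mem_filter.2 ⟨Finset.mem_univ _, hx,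
      fun hv' => hvS₀ (Finset.mem_map.2 ⟨_, hv', rfl⟩), huv⟩, rfl⟩)
  · rw [← Finset.card_sdiff_add_card_eq_card hS₀W, add_comm (W \ S₀).card]
    exact card_add_mul_mulLog2_le_of_sparse_cut (by omega) (by omega)
      (Finset.card_le_card Finset.sdiff_subset) Finset.card_le_card_sdiff_add_card hB

lemma exists_expander_decomposition (hα : 0 ≤ α) (d : ℕ) (P : Finset V → Prop)
    (hempty : P ∅) (hsmall : ∀ W : Finset V, W.card < d → P W)
    (hunion : ∀ A B : Finset V, Disjoint A B → (∀ u ∈ A, ∀ v ∈ B, ¬ G.Adj u v) →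
      P A → P B → P (A ∪ B))
    (W : Finset V) :
    ∃ (HL : List (Finset V)) (A : Finset V), HL.Pairwise Disjoint ∧
      (∀ H ∈ HL, H ⊆ W ∧ d ≤ H.card ∧ IsExpander (G.induce (H : Set V)) α) ∧
      A ⊆ W ∧ P A ∧ (W.card : ℝ) ≤ (HL.map Finset.card).sum + A.card + α * mulLog2 W.card := by
  induction W using Finset.strongInduction with
  | H W ih =>
  have hpot := mul_nonneg hα (mulLog2_nonneg W.card)
  by_cases hWd : W.card < d
  · exact ⟨[], W, List.Pairwise.nil, by simp, subset_rfl, hsmall W hWd, by simpa using hpot⟩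
  by_cases hWexp : IsExpander (G.induce (W : Set V)) α
  · exact ⟨[W], ∅, List.pairwise_singleton _ _, by simpa [not_lt.1 hWd] using hWexp,
      Finset.empty_subset _, hempty, by simpa using hpot⟩
  obtain ⟨W₁, W₂, hW₁, hW₂, hdisj, hnadj, hsplit⟩ := exists_split_of_not_isExpander hWexp
  obtain ⟨HL₁, A₁, hHL₁, hH₁, hA₁W, hA₁, hcov₁⟩ := ih W₁ hW₁
  obtain ⟨HL₂, A₂, hHL₂, hH₂, hA₂W, hA₂, hcov₂⟩ := ih W₂ hW₂
  refine ⟨HL₁ ++ HL₂, A₁ ∪ A₂, ?_, ?_, ?_, ?_, ?_⟩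
  · exact List.pairwise_append.2 ⟨hHL₁, hHL₂, fun X hX Y hY =>
      hdisj.mono (hH₁ X hX).1 (hH₂ Y hY).1⟩
  · intro H hH
    rcases List.mem_append.1 hH with hH | hH
    · exact ⟨(hH₁ H hH).1.trans hW₁.subset, (hH₁ H hH).2⟩
    · exact ⟨(hH₂ H hH).1.trans hW₂.subset, (hH₂ H hH).2⟩
  · exact Finset.union_subset (hA₁W.trans hW₁.subset) (hA₂W.trans hW₂.subset)
  · exact hunion A₁ A₂ (hdisj.mono hA₁W hA₂W)
      (fun u hu v hv => hnadj u (hA₁W hu) v (hA₂W hv)) hA₁ hA₂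
  · rw [Finset.card_union_of_disjoint (hdisj.mono hA₁W hA₂W), List.map_append, List.sum_append,
      Nat.cast_add, Nat.cast_add]
    linarith

lemma div_log_mul_mulLog2_le {k : ℝ} (hk : 0 ≤ k) {n : ℕ} (hn : 2 ≤ n) :
    k / (4 * Real.log n * n) * mulLog2 n ≤ k / 2 := by
  have hn' : (2 : ℝ) ≤ n := by exact_mod_cast hn
  have hlog : 0 < Real.log n := Real.log_pos (by linarith)
  have hlog2 := Real.log_two_gt_d9
  calc k / (4 * Real.log n * n) * mulLog2 n = k / (4 * Real.log 2) := by
        unfold mulLog2 Real.logb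
        field_simp
    _ ≤ k / 2 := by
        gcongr
        linarith

end ExpanderDecomposition

/-- **Expanding subgraphs forced by local subsystem codes** (Corollary
`bound-subsystem`). There is a universal constant `c > 0` such that: if a
subsystem code on `n` qubits with `k` logical qubits and dressed distance `d` is
local on a graph `G` on `n ≥ 2` vertices (its qubits are in bijection with the
vertices and every gauge check of weight `≥ 2` is supported on pairwise adjacent
vertices), then there are pairwise disjoint vertex subsets `H_j` with
`|H_j| ≥ d/3`, `Σ_j |H_j| ≥ k/2`, each inducing a `k/(4c·log(n)·n)`-expander. -/
theorem local_code_forces_expansion : ∃ c : ℝ, 0 < c ∧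
    ∀ (V : Type) [Fintype V], ∀ (G : SimpleGraph V),
      2 ≤ Fintype.card V →
      ∀ (r : ℕ) (g : Fin r → PauliVec (Fintype.card V)) (π : Fin (Fintype.card V) ≃ V),
        (∀ i : Fin r, 2 ≤ PauliWeight (g i) →
          ∀ q ∈ PauliSupport (g i), ∀ q' ∈ PauliSupport (g i),
            q ≠ q' → G.Adj (π q) (π q')) →
        ∃ (t : ℕ) (H : Fin t → Finset V),
          (∀ j j', j ≠ j' → Disjoint (H j) (H j')) ∧
          (∀ j, (dressedDistance g : ℝ) / 3 ≤ ((H j).card : ℝ)) ∧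
          ((subsysLogicalQubits g : ℝ) / 2 ≤ ((∑ j, (H j).card : ℕ) : ℝ)) ∧
          (∀ j, IsExpander (G.induce (↑(H j) : Set V))
            ((subsysLogicalQubits g : ℝ) /
              (4 * c * Real.log (Fintype.card V) * (Fintype.card V)))) := by
  refine ⟨1, one_pos, fun V _ G hV r g π hloc => ?_⟩
  set k := subsysLogicalQubits g
  set α : ℝ := k / (4 * 1 * Real.log (Fintype.card V) * (Fintype.card V)) with hα
  have hpot : α * mulLog2 (Fintype.card V) ≤ k / 2 := by
    rw [hα, mul_one]
    exact div_log_mul_mulLog2_le k.cast_nonneg hV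
  obtain ⟨HL, A, hHL, hH, -, hA, hcover⟩ := exists_expander_decomposition (G := G)
    (by positivity : 0 ≤ α) (dressedDistance g)
    (fun A => IsCorrectable g (A.map π.symm.toEmbedding)) isCorrectable_empty
    (fun W hW => isCorrectable_of_card_lt_dressedDistance (by simpa using hW))
    (fun A B hAB hnadj hA hB => hA.union_of_local hloc hB hAB hnadj) Finset.univ
  have hk : (k : ℝ) + A.card ≤ Fintype.card V := by
    exact_mod_cast by simpa using hA.subsysLogicalQubits_add_card_le
  refine ⟨HL.length, HL.get, fun i j => hHL.rel_get_of_ne fun _ _ h => h.symm, fun j => ?_, ?_,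
    fun j => (hH _ (List.get_mem _ _)).2.2⟩
  · exact (div_le_self (Nat.cast_nonneg _) (by norm_num)).trans
      (by exact_mod_cast (hH _ (List.get_mem _ _)).2.1)
  · rw [Finset.card_univ] at hcover
    simp only [List.get_eq_getElem, Fin.sum_univ_fun_getElem]
    linarith
end
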